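/- arXiv:2409.19860 — 2 statements merged into one kernel-verified Lean document; each statement's English description precedes it below -/
import Mathlib

section
/- Let S = {1,…,m} be a finite set, q a pmf on S with q(i) > 0 for all i, d > 0, and c : S → ℝ. Let A = { pmf p : p(i)/q(i) ≤ 1+d for all i } and define d̃(i, λ_i, ν) ∈ ℝ ∪ {+∞} by: d̃ = ν if λ_i = 0 and c(i) ≤ ν; d̃ = (1+d)·λ_i·exp((c(i) − λ_i − ν)/λ_i) + ν if λ_i > 0; and d̃ = +∞ if λ_i = 0 and c(i) > ν. Then strong duality holds: max_{p ∈ A} Σ_{i∈S} p(i)·c(i) = inf_{λ ∈ (ℝ≥0)^m, ν ∈ ℝ} Σ_{i∈S} q(i)·d̃(i, λ_i, ν). -/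
/-- The extended-real-valued dual integrand `d̃` of the paper. -/
noncomputable def dualIntegrand (d b l ν : ℝ) : EReal :=
  if l = 0 then (if b ≤ ν then ((ν : ℝ) : EReal) else ⊤)
  else (((1 + d) * l * Real.exp ((b - l - ν) / l) + ν : ℝ) : EReal)

/-!
Minimizing `d̃(b, l, ν)` over `l ≥ 0` gives `ν + (1 + d) (b - ν)⁺`, attained at `l = (b - ν)⁺`,
so the dual is the CVaR-type bound `∑ q i (ν + (1 + d) (c i - ν)⁺)`. This bound dominates
`∑ p i c i` for every `p ∈ A`, and equality holds under complementary slackness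
`p i (c i - ν) = (1 + d) q i (c i - ν)⁺`. Such a pair `(p, ν)` is produced greedily: fill the
budget `1` with the capacities `(1 + d) q i`, largest values of `c` first, and let `ν` be the
level at which the budget runs out.
-/

theorem EReal.coe_finset_sum {ι : Type*} (s : Finset ι) (f : ι → ℝ) :
    ((∑ i ∈ s, f i : ℝ) : EReal) = ∑ i ∈ s, (f i : EReal) :=
  map_sum (⟨⟨Real.toEReal, EReal.coe_zero⟩, EReal.coe_add⟩ : ℝ →+ EReal) f s

def dualBound (k ν b : ℝ) : ℝ := ν + k * max (b - ν) 0

theorem le_mul_exp_div_sub_one (x : ℝ) {l : ℝ} (hl : 0 < l) :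
    x ≤ l * Real.exp (x / l - 1) := by
  have h := mul_le_mul_of_nonneg_left (Real.add_one_le_exp (x / l - 1)) hl.le
  rwa [sub_add_cancel, mul_div_cancel₀ _ hl.ne'] at h

theorem dualBound_le_dualIntegrand {d : ℝ} (hd : 0 ≤ 1 + d) (b : ℝ) {l : ℝ} (hl : 0 ≤ l)
    (ν : ℝ) : (dualBound (1 + d) ν b : EReal) ≤ dualIntegrand d b l ν := by
  unfold dualIntegrand dualBound
  rcases hl.eq_or_lt with rfl | hl
  · rw [if_pos rfl]
    split_ifs with hb
    · simp [max_eq_right (sub_nonpos.2 hb)]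
    · exact le_top
  · rw [if_neg hl.ne', EReal.coe_le_coe_iff,
      show (b - l - ν) / l = (b - ν) / l - 1 by field_simp; ring, mul_assoc, add_comm ν]
    gcongr
    exact max_le (le_mul_exp_div_sub_one (b - ν) hl) (by positivity)

theorem dualIntegrand_max_sub_zero (d b ν : ℝ) :
    dualIntegrand d b (max (b - ν) 0) ν = dualBound (1 + d) ν b := by
  unfold dualIntegrand dualBound
  rcases le_or_gt b ν with hb | hb
  · simp [hb]
  · rw [max_eq_left (sub_pos.2 hb).le, if_neg (sub_pos.2 hb).ne',
      show (b - (b - ν) - ν) / (b - ν) = 0 by ring, Real.exp_zero]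
    norm_cast
    ring

section

variable {ι : Type*} [Fintype ι] {q c : ι → ℝ}

theorem coe_sum_mul_dualBound_le {d : ℝ} (hd : 0 ≤ 1 + d) (hq : ∀ i, 0 ≤ q i) {l : ι → ℝ}
    (hl : ∀ i, 0 ≤ l i) (ν : ℝ) :
    ((∑ i, q i * dualBound (1 + d) ν (c i) : ℝ) : EReal)
      ≤ ∑ i, (q i : EReal) * dualIntegrand d (c i) (l i) ν := by
  rw [EReal.coe_finset_sum]
  refine Finset.sum_le_sum fun i _ => ?_
  rw [EReal.coe_mul]
  exact mul_le_mul_of_nonneg_left (dualBound_le_dualIntegrand hd (c i) (hl i) ν)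
    (EReal.coe_nonneg.2 (hq i))

theorem sum_mul_dualIntegrand_max_sub_zero (d ν : ℝ) :
    ∑ i, (q i : EReal) * dualIntegrand d (c i) (max (c i - ν) 0) ν
      = ((∑ i, q i * dualBound (1 + d) ν (c i) : ℝ) : EReal) := by
  simp only [EReal.coe_finset_sum, EReal.coe_mul, dualIntegrand_max_sub_zero]

end

section

variable {ι : Type*} [Fintype ι] {p q c : ι → ℝ} {k : ℝ}

theorem sum_mul_sub_eq_sum_mul_dualBound_sub (hpq : ∑ i, p i = ∑ i, q i) (ν : ℝ) :
    ∑ i, q i * dualBound k ν (c i) - ∑ i, p i * c i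
      = ∑ i, (k * q i * max (c i - ν) 0 - p i * (c i - ν)) := by
  have h (i : ι) : q i * dualBound k ν (c i) - p i * c i
      = (q i - p i) * ν + (k * q i * max (c i - ν) 0 - p i * (c i - ν)) := by
    unfold dualBound; ring
  rw [← Finset.sum_sub_distrib, Finset.sum_congr rfl fun i _ => h i, Finset.sum_add_distrib,
    ← Finset.sum_mul, Finset.sum_sub_distrib, hpq, sub_self, zero_mul, zero_add]

theorem sum_mul_le_sum_mul_dualBound (hpq : ∑ i, p i = ∑ i, q i) (hp : ∀ i, 0 ≤ p i)
    (hpk : ∀ i, p i ≤ k * q i) (ν : ℝ) :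
    ∑ i, p i * c i ≤ ∑ i, q i * dualBound k ν (c i) := by
  rw [← sub_nonneg, sum_mul_sub_eq_sum_mul_dualBound_sub hpq]
  refine Finset.sum_nonneg fun i _ => sub_nonneg.2 ?_
  calc p i * (c i - ν) ≤ p i * max (c i - ν) 0 :=
        mul_le_mul_of_nonneg_left (le_max_left _ _) (hp i)
    _ ≤ k * q i * max (c i - ν) 0 := mul_le_mul_of_nonneg_right (hpk i) (le_max_right _ _)

theorem sum_mul_eq_sum_mul_dualBound (hpq : ∑ i, p i = ∑ i, q i) {ν : ℝ}
    (hslack : ∀ i, p i * (c i - ν) = k * q i * max (c i - ν) 0) :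
    ∑ i, p i * c i = ∑ i, q i * dualBound k ν (c i) := by
  rw [eq_comm, ← sub_eq_zero, sum_mul_sub_eq_sum_mul_dualBound_sub hpq]
  exact Finset.sum_eq_zero fun i _ => by rw [hslack, sub_self]

end

section

variable {ι : Type*} [DecidableEq ι] {w c : ι → ℝ}

theorem exists_greedy_filling (hw : ∀ i, 0 ≤ w i) (s : Finset ι) {B : ℝ} (hB : 0 ≤ B)
    (hBw : B ≤ ∑ i ∈ s, w i) :
    ∃ (p : ι → ℝ) (ν : ℝ), (∀ i, 0 ≤ p i ∧ p i ≤ w i) ∧ ∑ i ∈ s, p i = B ∧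
      ∀ i ∈ s, p i * (c i - ν) = w i * max (c i - ν) 0 := by
  induction s using Finset.induction_on_max_value c generalizing B with
  | empty => exact ⟨0, 0, fun i => ⟨le_rfl, hw i⟩, by simp_all [le_antisymm hBw hB], by simp⟩
  | insert a s ha hmax ih =>
    rw [Finset.sum_insert ha] at hBw
    rcases le_or_gt B (w a) with hBa | hBa
    · refine ⟨Pi.single a B, c a, fun i => ?_, ?_, fun i hi => ?_⟩
      · rcases eq_or_ne i a with rfl | hia <;> simp_all
      · simp
      · rcases eq_or_ne i a with rfl | hia
        · simp
        · have hca : c i ≤ c a := hmax i (by simpa [hia] using hi)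
          simp [hia, max_eq_right (sub_nonpos.2 hca)]
    · obtain ⟨p, ν, hp, hsum, hslack⟩ := ih (by linarith : 0 ≤ B - w a) (by linarith)
      -- Otherwise all of `s` lies below `ν`, so nothing of `s` is filled, yet `B - w a > 0`.
      have hνa : ν ≤ c a := by
        by_contra! hlt
        have hzero : ∀ i ∈ s, p i = 0 := fun i hi => by
          have := hslack i hi
          rw [max_eq_right (by linarith [hmax i hi])] at this
          exact (mul_eq_zero.1 (this.trans (mul_zero _))).resolve_right
            (by linarith [hmax i hi])
        linarith [Finset.sum_eq_zero hzero]
      refine ⟨Function.update p a (w a), ν, fun i => ?_, ?_, fun i hi => ?_⟩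
      · rcases eq_or_ne i a with rfl | hia <;> simp_all
      · rw [Finset.sum_insert ha, Function.update_self,
          Finset.sum_congr rfl fun i hi => Function.update_of_ne (ne_of_mem_of_not_mem hi ha) _ _,
          hsum, add_sub_cancel]
      · rcases Finset.mem_insert.1 hi with rfl | hi
        · rw [Function.update_self, max_eq_left (sub_nonneg.2 hνa)]
        · rw [Function.update_of_ne (ne_of_mem_of_not_mem hi ha), hslack i hi]

end

/-- strong duality of the worst-case expectation: the maximum of
`∑ i, p i * c i` over the ambiguity set `A = { pmf p : p i / q i ≤ 1 + d }` is
attained, and it equals the infimum (in the extended reals) over `λ ∈ (ℝ≥0)^m`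
and `ν ∈ ℝ` of `∑ i, q i * d̃(i, λ i, ν)`. -/
theorem strong_duality_worst_case_expectation
    (m : ℕ) (q : Fin m → ℝ) (hq0 : ∀ i, 0 < q i) (hq1 : ∑ i, q i = 1)
    (d : ℝ) (hd : 0 < d) (c : Fin m → ℝ) :
    let A : Set (Fin m → ℝ) :=
      {p | (∀ i, 0 ≤ p i) ∧ ∑ i, p i = 1 ∧ ∀ i, p i / q i ≤ 1 + d}
    ∃ p ∈ A, (∀ p' ∈ A, ∑ i, p' i * c i ≤ ∑ i, p i * c i) ∧
      ((∑ i, p i * c i : ℝ) : EReal)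
        = ⨅ (l : Fin m → ℝ) (_ : ∀ i, 0 ≤ l i) (ν : ℝ),
            ∑ i, ((q i : EReal) * dualIntegrand d (c i) (l i) ν) := by
  intro A
  have hd' : 0 ≤ 1 + d := by linarith
  have hmemA {p : Fin m → ℝ} : p ∈ A ↔ (∀ i, 0 ≤ p i) ∧ ∑ i, p i = ∑ i, q i ∧
      ∀ i, p i ≤ (1 + d) * q i := by
    simp only [A, Set.mem_ofPred_eq, hq1, div_le_iff₀ (hq0 _), mul_comm (1 + d)]
  obtain ⟨p, ν, hp, hsum, hslack⟩ := exists_greedy_filling (c := c)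
    (fun i => mul_nonneg hd' (hq0 i).le) Finset.univ zero_le_one
    (by rw [← Finset.mul_sum, hq1]; linarith)
  have hpq : ∑ i, p i = ∑ i, q i := hsum.trans hq1.symm
  have hpA : p ∈ A := hmemA.2 ⟨fun i => (hp i).1, hpq, fun i => (hp i).2⟩
  have hval := sum_mul_eq_sum_mul_dualBound hpq fun i => hslack i (Finset.mem_univ i)
  have hweak {p' : Fin m → ℝ} (hp' : p' ∈ A) (ν' : ℝ) :
      ∑ i, p' i * c i ≤ ∑ i, q i * dualBound (1 + d) ν' (c i) :=
    let ⟨hp'0, hp'q, hp'k⟩ := hmemA.1 hp'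
    sum_mul_le_sum_mul_dualBound hp'q hp'0 hp'k ν'
  refine ⟨p, hpA, fun p' hp' => hval ▸ hweak hp' ν, le_antisymm ?_ ?_⟩
  · exact le_iInf₂ fun l hl => le_iInf fun ν' =>
      (EReal.coe_le_coe_iff.2 (hweak hpA ν')).trans
        (coe_sum_mul_dualBound_le hd' (fun i => (hq0 i).le) hl ν')
  · calc ⨅ (l : Fin m → ℝ) (_ : ∀ i, 0 ≤ l i) (ν' : ℝ),
          ∑ i, ((q i : EReal) * dualIntegrand d (c i) (l i) ν')
        ≤ ∑ i, (q i : EReal) * dualIntegrand d (c i) (max (c i - ν) 0) ν :=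
          iInf₂_le_of_le (fun i => max (c i - ν) 0) (fun i => le_max_right _ _) (iInf_le _ ν)
      _ = _ := by rw [sum_mul_dualIntegrand_max_sub_zero, hval]
end

section
/- Let S = {1,…,m} be a finite set, let q be the uniform pmf q(i) = 1/m, let d > 0 be such that C := m/(1+d) is a positive integer, let X ⊆ ℝⁿ, and let f : X × S → ℝ. Let A = { pmf p : p(i)/q(i) ≤ 1+d for all i }. Then a point x* ∈ X minimizes x ↦ max_{p ∈ A} Σ_{i∈S} p(i)·f(x,i) over X if and only if x* minimizes x ↦ max over C-element subsets T ⊆ S of (1/C)·Σ_{i∈T} f(x,i) over X. -/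
/-!
The constraint `p i / q i ≤ 1 + d` says exactly `p i ≤ 1 / C`, so both objectives are
suprema over the same data: `J₁ x` is the largest `p`-average of `f x` over the capped simplex
`{p | 0 ≤ p ≤ 1/C, ∑ p = 1}`, and `J₂ x` is the largest average of `f x` over `C` points.
These coincide: the uniform weight on a `C`-set lies in the capped simplex, and conversely if
`T` is a best `C`-set then, by exchanging one element, `g ≥ t` on `T` and `g ≤ t` off `T` for
`t = min_T g`, whence `∑ (p i - 1_T i / C) (g i - t) ≤ 0` termwise. So `J₁ = J₂` and they have the same minimizers.
-/

open Finset

lemma apply_le_of_forall_sum_le {ι : Type*} [DecidableEq ι] {g : ι → ℝ} {T : Finset ι}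
    (hT : ∀ T' : Finset ι, T'.card = T.card → ∑ k ∈ T', g k ≤ ∑ k ∈ T, g k)
    {i j : ι} (hi : i ∈ T) (hj : j ∉ T) : g j ≤ g i := by
  have hj' : j ∉ T.erase i := fun h => hj (mem_of_mem_erase h)
  have hcard : (insert j (T.erase i)).card = T.card := by
    rw [card_insert_of_notMem hj', card_erase_add_one hi]
  have := hT _ hcard
  rw [sum_insert hj', sum_erase_eq_sub hi] at this
  linarith

variable {ι : Type*} [Fintype ι]

def cappedSimplex (c : ℝ) : Set (ι → ℝ) :=
  {p | (∀ i, 0 ≤ p i) ∧ ∑ i, p i = 1 ∧ ∀ i, p i ≤ c}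

lemma sum_mul_le_of_threshold {p g : ι → ℝ} {c t : ℝ} {T : Finset ι}
    (hp0 : ∀ i, 0 ≤ p i) (hp1 : ∑ i, p i = 1) (hpc : ∀ i, p i ≤ c) (hcT : c * T.card = 1)
    (hin : ∀ i ∈ T, t ≤ g i) (hout : ∀ i ∉ T, g i ≤ t) :
    ∑ i, p i * g i ≤ c * ∑ i ∈ T, g i := by
  classical
  let w : ι → ℝ := fun i => if i ∈ T then c else 0
  have hw_sum : ∑ i, w i = 1 := by simp [w, mul_comm, hcT]
  have hw_mul : ∑ i, w i * g i = c * ∑ i ∈ T, g i := by simp [w, ite_mul, mul_sum]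
  have hterm : ∀ i, (p i - w i) * (g i - t) ≤ 0 := by
    intro i
    by_cases hi : i ∈ T
    · simpa [w, hi] using mul_nonpos_of_nonpos_of_nonneg (sub_nonpos.2 (hpc i))
        (sub_nonneg.2 (hin i hi))
    · simpa [w, hi] using mul_nonpos_of_nonneg_of_nonpos (hp0 i) (sub_nonpos.2 (hout i hi))
  have hexpand : ∑ i, (p i - w i) * (g i - t) =
      ∑ i, p i * g i - ∑ i, w i * g i - (∑ i, p i - ∑ i, w i) * t := by
    simp only [sub_mul, mul_sub, sum_sub_distrib, ← sum_mul]
  have hsum : ∑ i, (p i - w i) * (g i - t) ≤ 0 := sum_nonpos fun i _ => hterm i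
  rw [hexpand, hp1, hw_sum, hw_mul, sub_self, zero_mul, sub_zero] at hsum
  linarith

lemma isGreatest_sum_mul_cappedSimplex {g : ι → ℝ} {C : ℕ} {T : Finset ι} (hTC : T.card = C)
    (hC : 1 ≤ C) (hT : ∀ T' : Finset ι, T'.card = C → ∑ k ∈ T', g k ≤ ∑ k ∈ T, g k) :
    IsGreatest ((fun p => ∑ i, p i * g i) '' cappedSimplex (1 / C)) ((∑ i ∈ T, g i) / C) := by
  classical
  have hCpos : (0 : ℝ) < C := by exact_mod_cast hC
  have hcT : 1 / (C : ℝ) * T.card = 1 := by rw [hTC]; field_simp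
  refine ⟨⟨fun i => if i ∈ T then 1 / C else 0, ⟨fun i => ?_, ?_, fun i => ?_⟩, ?_⟩, ?_⟩
  · by_cases hi : i ∈ T <;> simp [hi, hCpos.le]
  · simpa [mul_comm] using hcT
  · by_cases hi : i ∈ T <;> simp [hi, hCpos.le]
  · simp [ite_mul, mul_sum, div_eq_inv_mul]
  rintro _ ⟨p, ⟨hp0, hp1, hpc⟩, rfl⟩
  obtain ⟨i₀, hi₀, hmin⟩ := T.exists_min_image g (card_pos.1 (by omega))
  rw [div_eq_inv_mul, ← one_div]
  exact sum_mul_le_of_threshold hp0 hp1 hpc hcT hmin fun j hj =>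
    apply_le_of_forall_sum_le (hTC ▸ hT) hi₀ hj

lemma sSup_sum_mul_cappedSimplex (g : ι → ℝ) {C : ℕ} (hC : 1 ≤ C) (hCι : C ≤ Fintype.card ι) :
    sSup ((fun p => ∑ i, p i * g i) '' cappedSimplex (1 / C)) =
      sSup {w : ℝ | ∃ T : Finset ι, T.card = C ∧ w = (∑ i ∈ T, g i) / C} := by
  obtain ⟨T, hTmem, hTmax⟩ := exists_max_image (univ.powersetCard C) (fun T => ∑ i ∈ T, g i)
    (powersetCard_nonempty.2 (by simpa using hCι))
  have hTC : T.card = C := mem_powersetCard_univ.1 hTmem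
  have hT : ∀ T' : Finset ι, T'.card = C → ∑ k ∈ T', g k ≤ ∑ k ∈ T, g k :=
    fun T' h => hTmax T' (mem_powersetCard_univ.2 h)
  have hsubsets : IsGreatest {w : ℝ | ∃ T : Finset ι, T.card = C ∧ w = (∑ i ∈ T, g i) / C}
      ((∑ i ∈ T, g i) / C) := by
    refine ⟨⟨T, hTC, rfl⟩, ?_⟩
    rintro _ ⟨T', hT', rfl⟩
    exact div_le_div_of_nonneg_right (hT T' hT') C.cast_nonneg
  rw [(isGreatest_sum_mul_cappedSimplex hTC hC hT).csSup_eq, hsubsets.csSup_eq]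

theorem ddroc_minimizers_eq_worst_C_average_minimizers_general
    (n m : ℕ) (d : ℝ) (hd : 0 < d)
    (C : ℕ) (hC1 : 1 ≤ C) (hCd : (C : ℝ) = (m : ℝ) / (1 + d))
    (X : Set (Fin n → ℝ)) (f : (Fin n → ℝ) → Fin m → ℝ)
    (xstar : Fin n → ℝ) :
    let q : Fin m → ℝ := fun _ => 1 / (m : ℝ)
    let A : Set (Fin m → ℝ) :=
      {p | (∀ i, 0 ≤ p i) ∧ ∑ i, p i = 1 ∧ ∀ i, p i / q i ≤ 1 + d}
    let J₁ : (Fin n → ℝ) → ℝ := fun x => sSup ((fun p => ∑ i, p i * f x i) '' A)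
    let J₂ : (Fin n → ℝ) → ℝ := fun x =>
      sSup {w : ℝ | ∃ T : Finset (Fin m), T.card = C ∧ w = (∑ i ∈ T, f x i) / (C : ℝ)}
    (∀ x ∈ X, J₁ xstar ≤ J₁ x) ↔ (∀ x ∈ X, J₂ xstar ≤ J₂ x) := by
  intro q A J₁ J₂
  have hCpos : (0 : ℝ) < C := by exact_mod_cast hC1
  have hmC : (m : ℝ) = C * (1 + d) := by rw [hCd]; field_simp
  have hCm : C ≤ m := by exact_mod_cast (show (C : ℝ) ≤ m by rw [hmC]; nlinarith)
  have hratio (x : ℝ) : x / (1 / m) ≤ 1 + d ↔ x ≤ 1 / C := by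
    rw [div_div_eq_mul_div, div_one, hmC, ← mul_assoc, mul_le_iff_le_one_left (by linarith),
      le_div_iff₀ hCpos]
  have hA : A = cappedSimplex (1 / C) := by
    ext p
    simp only [A, q, cappedSimplex, Set.mem_ofPred_eq, hratio]
  have hJ : J₁ = J₂ := funext fun x => by
    simp only [J₁, J₂, hA]
    exact sSup_sum_mul_cappedSimplex (f x) hC1 (by simpa using hCm)
  rw [hJ]

/-- for the uniform nominal pmf `q i = 1/m` and `d > 0` such that
`C = m/(1+d)` is a positive integer, a point `x* ∈ X` minimizes the worst-case
objective `x ↦ max_{p ∈ A} ∑ i, p i * f x i` over `X` if and only if it minimizes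
`x ↦ max_{T ⊆ S, |T| = C} (∑ i ∈ T, f x i) / C` over `X`. -/
theorem ddroc_minimizers_eq_worst_C_average_minimizers
    (n m : ℕ) (hm : 1 ≤ m) (d : ℝ) (hd : 0 < d)
    (C : ℕ) (hC1 : 1 ≤ C) (hCd : (C : ℝ) = (m : ℝ) / (1 + d))
    (X : Set (Fin n → ℝ)) (f : (Fin n → ℝ) → Fin m → ℝ)
    (xstar : Fin n → ℝ) (hxstar : xstar ∈ X) :
    let q : Fin m → ℝ := fun _ => 1 / (m : ℝ)
    let A : Set (Fin m → ℝ) :=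
      {p | (∀ i, 0 ≤ p i) ∧ ∑ i, p i = 1 ∧ ∀ i, p i / q i ≤ 1 + d}
    let J₁ : (Fin n → ℝ) → ℝ := fun x => sSup ((fun p => ∑ i, p i * f x i) '' A)
    let J₂ : (Fin n → ℝ) → ℝ := fun x =>
      sSup {w : ℝ | ∃ T : Finset (Fin m), T.card = C ∧ w = (∑ i ∈ T, f x i) / (C : ℝ)}
    (∀ x ∈ X, J₁ xstar ≤ J₁ x) ↔ (∀ x ∈ X, J₂ xstar ≤ J₂ x) :=
  ddroc_minimizers_eq_worst_C_average_minimizers_general n m d hd C hC1 hCd X f xstar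
end
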